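/- arXiv:1810.04539 — 3 statements merged into one kernel-verified Lean document; each statement's English description precedes it below -/
import Mathlib

section
/- Let g(x) = G(x - x*) + x* be a linear map on R^d. Consider the iteration x_i = g(y_{i-1}), y_i = sum_{j=1}^i (alpha_j^{(i)} x_j + beta_j^{(i)} y_{j-1}) with y_0 = x_0, where for each i the coefficients satisfy sum_j (alpha_j^{(i)} + beta_j^{(i)}) = 1 and alpha_i^{(i)} ≠ 0. Then for every N there exists a polynomial p_N of degree exactly N with p_N(1) = 1 such that y_N - x* = p_N(G)(x_0 - x*). -/
/-!
Write `e_i = y_i - x*`. Then `x_j - x* = G e_{j-1}`, and because the coefficients of `y_N` sum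
to one, `e_N = ∑_{j=1}^N (α_j^{(N)} G + β_j^{(N)}) e_{j-1}`. Hence `e_N = p_N(G) e_0` for the
polynomials `p_0 = 1`, `p_N = ∑_{j=1}^N (α_j^{(N)} X + β_j^{(N)}) p_{j-1}`. By induction
`p_N(1) = ∑_j (α_j^{(N)} + β_j^{(N)}) = 1`, and in `p_N` only the term `j = N` reaches degree `N`,
with leading coefficient `α_N^{(N)}` times that of `p_{N-1}`, which is nonzero.
-/

open Matrix Polynomial Finset

theorem Finset.sum_smul_add_smul_sub_of_sum_eq_one {R M ι : Type*} [Ring R] [AddCommGroup M]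
    [Module R M] {s : Finset ι} {a b : ι → R} (h : ∑ i ∈ s, (a i + b i) = 1) (u v : ι → M) (c : M) :
    ∑ i ∈ s, (a i • u i + b i • v i) - c = ∑ i ∈ s, (a i • (u i - c) + b i • (v i - c)) := by
  conv_lhs => rw [← one_smul R c, ← h, sum_smul, ← sum_sub_distrib]
  refine sum_congr rfl fun i _ => ?_
  simp only [smul_sub, add_smul]
  abel

-- `attach` only supplies `j ∈ Icc 1 N` to the termination proof; see `rnaPoly_of_pos`.
noncomputable def rnaPoly {R : Type*} [CommRing R] (α β : ℕ → ℕ → R) (N : ℕ) : R[X] :=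
  if N = 0 then 1
  else ∑ j ∈ (Icc 1 N).attach, (C (α N j) * X + C (β N j)) * rnaPoly α β (j - 1)
termination_by N
decreasing_by have := mem_Icc.mp j.2; omega

section rnaPoly

variable {R : Type*} [CommRing R] (α β : ℕ → ℕ → R)

@[simp]
theorem rnaPoly_zero : rnaPoly α β 0 = 1 := by
  rw [rnaPoly, if_pos rfl]

theorem rnaPoly_of_pos {N : ℕ} (hN : 1 ≤ N) :
    rnaPoly α β N = ∑ j ∈ Icc 1 N, (C (α N j) * X + C (β N j)) * rnaPoly α β (j - 1) := by
  rw [rnaPoly, if_neg (by omega),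
    sum_attach (Icc 1 N) fun j => (C (α N j) * X + C (β N j)) * rnaPoly α β (j - 1)]

theorem eval_one_rnaPoly (hsum : ∀ i, 1 ≤ i → ∑ j ∈ Icc 1 i, (α i j + β i j) = 1) (N : ℕ) :
    (rnaPoly α β N).eval 1 = 1 := by
  induction N using Nat.strong_induction_on with
  | _ N ih =>
    rcases Nat.eq_zero_or_pos N with rfl | hN
    · simp
    rw [rnaPoly_of_pos α β hN, eval_finsetSum]
    refine (sum_congr rfl fun j hj => ?_).trans (hsum N hN)
    have hj := mem_Icc.mp hj
    simp [ih (j - 1) (by omega)]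

theorem degree_rnaPoly [IsDomain R] (hα : ∀ i, 1 ≤ i → α i i ≠ 0) (N : ℕ) :
    (rnaPoly α β N).degree = N := by
  induction N using Nat.strong_induction_on with
  | _ N ih =>
    rcases N with _ | M
    · simp
    have hlast : ((C (α (M + 1) (M + 1)) * X + C (β (M + 1) (M + 1))) * rnaPoly α β M).degree
        = ↑(M + 1) := by
      rw [degree_mul, degree_linear (hα _ (by omega)), ih M (by omega), add_comm]
      norm_cast
    have hlower : (∑ j ∈ Icc 1 M, (C (α (M + 1) j) * X + C (β (M + 1) j)) *
        rnaPoly α β (j - 1)).degree < ↑(M + 1) := by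
      refine (degree_sum_le _ _).trans_lt
        ((Finset.sup_lt_iff (WithBot.bot_lt_coe _)).2 fun j hj => ?_)
      have hj := mem_Icc.mp hj
      calc _ ≤ 1 + (rnaPoly α β (j - 1)).degree :=
            (degree_mul_le _ _).trans (add_le_add degree_linear_le le_rfl)
        _ = ↑j := by
            rw [ih (j - 1) (by omega), ← Nat.cast_one, ← Nat.cast_add, Nat.add_sub_cancel' hj.1]
        _ < ↑(M + 1) := by exact_mod_cast Nat.lt_succ_of_le hj.2
    rw [rnaPoly_of_pos α β (by omega), sum_Icc_succ_top (by omega), Nat.add_sub_cancel, add_comm,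
      degree_add_eq_left_of_degree_lt (hlast ▸ hlower), hlast]

theorem sub_eq_aeval_rnaPoly_mulVec {n : Type*} [Fintype n] [DecidableEq n]
    (G : Matrix n n R) (xstar : n → R) (x y : ℕ → n → R) (hy0 : y 0 = x 0)
    (hx : ∀ i, 1 ≤ i → x i - xstar = G *ᵥ (y (i - 1) - xstar))
    (hy : ∀ i, 1 ≤ i → y i = ∑ j ∈ Icc 1 i, (α i j • x j + β i j • y (j - 1)))
    (hsum : ∀ i, 1 ≤ i → ∑ j ∈ Icc 1 i, (α i j + β i j) = 1) (N : ℕ) :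
    y N - xstar = aeval G (rnaPoly α β N) *ᵥ (x 0 - xstar) := by
  induction N using Nat.strong_induction_on with
  | _ N ih =>
    rcases Nat.eq_zero_or_pos N with rfl | hN
    · simp [hy0]
    rw [hy N hN, sum_smul_add_smul_sub_of_sum_eq_one (hsum N hN), rnaPoly_of_pos α β hN, map_sum,
      sum_mulVec]
    refine sum_congr rfl fun j hj => ?_
    have hj := mem_Icc.mp hj
    rw [_root_.map_mul, ← mulVec_mulVec, ← ih (j - 1) (by omega), hx j hj.1]
    simp [add_mulVec, smul_mulVec, Algebra.algebraMap_eq_smul_one]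

end rnaPoly

/-- For the linear iteration `x_i = g(y_{i-1})`,
`y_i = ∑_{j=1}^i (α_j^{(i)} x_j + β_j^{(i)} y_{j-1})` with `y_0 = x_0`, where
`g(x) = G(x - x*) + x*`, the coefficients of each combination sum to one and the
leading coefficient `α_i^{(i)}` is nonzero, every iterate satisfies
`y_N - x* = p_N(G)(x_0 - x*)` for some polynomial `p_N` of degree exactly `N`
with `p_N(1) = 1`. -/
theorem rna_iterates_are_polynomials
    (d : ℕ) (G : Matrix (Fin d) (Fin d) ℝ) (xstar : Fin d → ℝ)
    (g : (Fin d → ℝ) → (Fin d → ℝ))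
    (hg : ∀ v, g v = G.mulVec (v - xstar) + xstar)
    (x y : ℕ → (Fin d → ℝ))
    (α β : ℕ → ℕ → ℝ)
    (hy0 : y 0 = x 0)
    (hx : ∀ i, 1 ≤ i → x i = g (y (i - 1)))
    (hy : ∀ i, 1 ≤ i →
      y i = ∑ j ∈ Finset.Icc 1 i, (α i j • x j + β i j • y (j - 1)))
    (hsum : ∀ i, 1 ≤ i → ∑ j ∈ Finset.Icc 1 i, (α i j + β i j) = 1)
    (hα : ∀ i, 1 ≤ i → α i i ≠ 0) :
    ∀ N : ℕ, ∃ p : Polynomial ℝ,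
      p.degree = (N : ℕ) ∧ p.eval 1 = 1 ∧
      y N - xstar = (Polynomial.aeval G p).mulVec (x 0 - xstar) := by
  have hx_err : ∀ i, 1 ≤ i → x i - xstar = G *ᵥ (y (i - 1) - xstar) := fun i hi => by
    rw [hx i hi, hg, add_sub_cancel_right]
  exact fun N => ⟨rnaPoly α β N, degree_rnaPoly α β hα N, eval_one_rnaPoly α β hsum N,
    sub_eq_aeval_rnaPoly_mulVec α β G xstar x y hy0 hx_err hy hsum N⟩
end

section
/- Let G be a d×d real matrix without eigenvalue 1, let g(x) = G(x - x*) + x*, and let Y = [y_0, ..., y_{N-1}], R = [r(y_0), ..., r(y_{N-1})] where y_i - x* = p_i(G)(x_0 - x*) with p_i of degree exactly i and p_i(1) = 1. Let c minimize ||Rc||_2 over c with 1^T c = 1, and set y_extr = (Y - η R) c. Then ||r(y_extr)||_2 ≤ ||I - η(G - I)||_2 · min_{p: deg p ≤ N-1, p(1)=1} ||p(G) r(x_0)||_2, where r(x) = g(x) - x. -/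
open Matrix Polynomial Finset
open scoped Matrix.Norms.L2Operator

/-- Euclidean (ℓ₂) norm of a real vector. -/
noncomputable def vnorm {ι : Type*} [Fintype ι] (v : ι → ℝ) : ℝ :=
  ‖(WithLp.toLp 2 v : EuclideanSpace ℝ ι)‖

/-!
For an affine map `g v = G (v - x*) + x*` the residual `r v = g v - v = (G - 1)(v - x*)` is an
affine function of `v`, and `G - 1` commutes with every `p(G)`.  Hence an affine combination
`Rc = ∑ cᵢ r(yᵢ)` equals `q(G) r(x₀)` for `q = ∑ cᵢ pᵢ`, and since the `pᵢ` have degrees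
`0, …, N - 1` every `q` with `deg q ≤ N - 1`, `q(1) = 1` arises this way from some affine `c`:
the optimal `c` beats every such `q`.  Finally `r(y_extr) = (1 - η (G - 1)) Rc`, which costs the
factor `‖1 - η (G - 1)‖`.
-/

theorem Polynomial.span_range_eq_degreeLT {K : Type*} [Field K] {N : ℕ} (p : Fin N → K[X])
    (hdeg : ∀ i, (p i).degree = (i : ℕ)) :
    Submodule.span K (Set.range p) = degreeLT K N := by
  classical
  -- extend `p` by `X ^ i` beyond `N` to get a polynomial sequence
  let S : Sequence K :=
    { elems' := fun i => if h : i < N then p ⟨i, h⟩ else X ^ i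
      degree_eq' := fun i => by
        by_cases h : i < N
        · simpa [h] using hdeg ⟨i, h⟩
        · simp [h] }
  have hrange : S '' Set.Iio N = Set.range p := by
    ext f
    simp only [Set.mem_image, Set.mem_Iio, Set.mem_range]
    constructor
    · rintro ⟨i, hi, rfl⟩
      exact ⟨⟨i, hi⟩, by simp [S, hi]⟩
    · rintro ⟨i, rfl⟩
      exact ⟨i, i.isLt, by simp [S, i.isLt]⟩
  rw [← hrange]
  exact S.span_degreeLT fun i _ => (leadingCoeff_ne_zero.mpr (S.ne_zero i)).isUnit

theorem Polynomial.exists_sum_smul_eq_of_degree_lt {K : Type*} [Field K] {N : ℕ}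
    (p : Fin N → K[X]) (hdeg : ∀ i, (p i).degree = (i : ℕ)) {q : K[X]} (hq : q.degree < N) :
    ∃ c : Fin N → K, ∑ i, c i • p i = q :=
  (Submodule.mem_span_range_iff_exists_fun K).mp <| by
    rwa [span_range_eq_degreeLT p hdeg, mem_degreeLT]

section

variable {m n ι : Type*} [Fintype n] [Fintype ι]

theorem vnorm_mulVec_le [Fintype m] [DecidableEq n] (A : Matrix m n ℝ) (v : n → ℝ) :
    vnorm (A *ᵥ v) ≤ ‖A‖ * vnorm v :=
  A.l2_opNorm_mulVec (WithLp.toLp 2 v)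

variable {K : Type*} [CommRing K]

theorem apply_sub_eq_mulVec_of_affine [DecidableEq n] {G : Matrix n n K} {xstar : n → K}
    {g : (n → K) → n → K} (hg : ∀ v, g v = G *ᵥ (v - xstar) + xstar) (v : n → K) :
    g v - v = (G - 1) *ᵥ (v - xstar) := by
  rw [hg, sub_mulVec, one_mulVec]
  abel

theorem apply_sum_smul_sub_smul_eq_mulVec [DecidableEq n] {B : Matrix n n K} {xstar : n → K}
    {r : (n → K) → n → K} (hr : ∀ v, r v = B *ᵥ (v - xstar))
    (y : ι → n → K) {c : ι → K} (hc : ∑ i, c i = 1) (η : K) :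
    r (∑ i, c i • (y i - η • r (y i))) = (1 - η • B) *ᵥ ∑ i, c i • r (y i) := by
  have hshift : ∑ i, c i • (y i - η • r (y i)) - xstar
      = ∑ i, c i • (y i - xstar) - η • ∑ i, c i • r (y i) := by
    conv_lhs => rw [← one_smul K xstar, ← hc, sum_smul, ← sum_sub_distrib]
    rw [smul_sum, ← sum_sub_distrib]
    refine sum_congr rfl fun i _ => ?_
    rw [smul_comm η, ← smul_sub, ← smul_sub]
    congr 1
    abel
  have hB : B *ᵥ ∑ i, c i • (y i - xstar) = ∑ i, c i • r (y i) := by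
    simp only [mulVec_sum, mulVec_smul, hr]
  rw [hr, hshift, mulVec_sub, mulVec_smul, hB, sub_mulVec, one_mulVec, smul_mulVec]

theorem sum_smul_eq_aeval_mulVec_of_affine [DecidableEq n] {G : Matrix n n K} {xstar : n → K}
    {r : (n → K) → n → K} (hr : ∀ v, r v = (G - 1) *ᵥ (v - xstar)) {x0 : n → K}
    {y : ι → n → K} {p : ι → K[X]} (hy : ∀ i, y i - xstar = aeval G (p i) *ᵥ (x0 - xstar))
    (c : ι → K) :
    ∑ i, c i • r (y i) = aeval G (∑ i, c i • p i) *ᵥ r x0 := by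
  have hcomm (q : K[X]) : (G - 1) * aeval G q = aeval G q * (G - 1) := by
    have h := ((Commute.all (X - 1) q).map (aeval G)).eq
    rwa [map_sub, aeval_X, map_one] at h
  simp only [hr, hy, mulVec_mulVec, hcomm, map_sum, map_smul, sum_mul, smul_mul_assoc,
    sum_mulVec, smul_mulVec]

end

theorem rna_linear_convergence_rate_general
    (d N : ℕ) (hN : 1 ≤ N)
    (G : Matrix (Fin d) (Fin d) ℝ) (xstar : Fin d → ℝ)
    (g : (Fin d → ℝ) → (Fin d → ℝ))
    (hg : ∀ v, g v = G.mulVec (v - xstar) + xstar)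
    (x0 : Fin d → ℝ) (y : Fin N → (Fin d → ℝ))
    (p : Fin N → Polynomial ℝ)
    (hdeg : ∀ i, (p i).degree = (i : ℕ))
    (hval : ∀ i, (p i).eval 1 = 1)
    (hy : ∀ i, y i - xstar = (Polynomial.aeval G (p i)).mulVec (x0 - xstar))
    (η : ℝ)
    (c : Fin N → ℝ) (hc1 : ∑ i, c i = 1)
    (hcopt : ∀ c' : Fin N → ℝ, ∑ i, c' i = 1 →
      vnorm (∑ i, c i • (g (y i) - y i)) ≤ vnorm (∑ i, c' i • (g (y i) - y i)))
    (yextr : Fin d → ℝ)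
    (hyextr : yextr = ∑ i, c i • (y i - η • (g (y i) - y i))) :
    vnorm (g yextr - yextr) ≤
      ‖(1 : Matrix (Fin d) (Fin d) ℝ) - η • (G - 1)‖ *
        sInf {t : ℝ | ∃ q : Polynomial ℝ, q.degree ≤ (N - 1 : ℕ) ∧ q.eval 1 = 1 ∧
          t = vnorm ((Polynomial.aeval G q).mulVec (g x0 - x0))} := by
  have hr := apply_sub_eq_mulVec_of_affine hg
  have hRc := sum_smul_eq_aeval_mulVec_of_affine hr hy
  have hopt : vnorm (∑ i, c i • (g (y i) - y i)) ≤
      sInf {t : ℝ | ∃ q : Polynomial ℝ, q.degree ≤ (N - 1 : ℕ) ∧ q.eval 1 = 1 ∧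
        t = vnorm ((Polynomial.aeval G q).mulVec (g x0 - x0))} := by
    refine le_csInf ⟨_, 1, by simp, by simp, rfl⟩ ?_
    rintro _ ⟨q, hqdeg, hq1, rfl⟩
    obtain ⟨c', rfl⟩ := exists_sum_smul_eq_of_degree_lt p hdeg
      (hqdeg.trans_lt (by exact_mod_cast Nat.sub_lt hN one_pos))
    rw [← hRc]
    exact hcopt c' (by simpa [eval_finsetSum, hval] using hq1)
  calc vnorm (g yextr - yextr)
      = vnorm ((1 - η • (G - 1)) *ᵥ ∑ i, c i • (g (y i) - y i)) := by
        rw [hyextr]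
        exact congrArg vnorm (apply_sum_smul_sub_smul_eq_mulVec hr y hc1 η)
    _ ≤ ‖(1 : Matrix (Fin d) (Fin d) ℝ) - η • (G - 1)‖ * vnorm (∑ i, c i • (g (y i) - y i)) :=
        vnorm_mulVec_le _ _
    _ ≤ _ := mul_le_mul_of_nonneg_left hopt (norm_nonneg _)

/-- Convergence rate of (unregularized) RNA on linear iterations:
if `y_i - x* = p_i(G)(x_0 - x*)` with `p_i` of degree exactly `i`, `p_i(1) = 1`,
`c` minimizes `‖R c‖₂` over affine coefficients, and
`y_extr = (Y - η R) c`, then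
`‖r(y_extr)‖₂ ≤ ‖I - η (G - I)‖₂ ⋅ min_{deg p ≤ N-1, p(1)=1} ‖p(G) r(x_0)‖₂`. -/
theorem rna_linear_convergence_rate
    (d N : ℕ) (hN : 1 ≤ N)
    (G : Matrix (Fin d) (Fin d) ℝ) (xstar : Fin d → ℝ)
    (hG : ∀ v : Fin d → ℝ, G.mulVec v = v → v = 0)
    (g : (Fin d → ℝ) → (Fin d → ℝ))
    (hg : ∀ v, g v = G.mulVec (v - xstar) + xstar)
    (x0 : Fin d → ℝ) (y : Fin N → (Fin d → ℝ))
    (p : Fin N → Polynomial ℝ)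
    (hdeg : ∀ i, (p i).degree = (i : ℕ))
    (hval : ∀ i, (p i).eval 1 = 1)
    (hy : ∀ i, y i - xstar = (Polynomial.aeval G (p i)).mulVec (x0 - xstar))
    (η : ℝ) (hη : η ≠ 0)
    (c : Fin N → ℝ) (hc1 : ∑ i, c i = 1)
    (hcopt : ∀ c' : Fin N → ℝ, ∑ i, c' i = 1 →
      vnorm (∑ i, c i • (g (y i) - y i)) ≤ vnorm (∑ i, c' i • (g (y i) - y i)))
    (yextr : Fin d → ℝ)
    (hyextr : yextr = ∑ i, c i • (y i - η • (g (y i) - y i))) :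
    vnorm (g yextr - yextr) ≤
      ‖(1 : Matrix (Fin d) (Fin d) ℝ) - η • (G - 1)‖ *
        sInf {t : ℝ | ∃ q : Polynomial ℝ, q.degree ≤ (N - 1 : ℕ) ∧ q.eval 1 = 1 ∧
          t = vnorm ((Polynomial.aeval G q).mulVec (g x0 - x0))} :=
  rna_linear_convergence_rate_general d N hN G xstar g hg x0 y p hdeg hval hy η c hc1 hcopt yextr
    hyextr
end

section
/- Let A be a real symmetric n×n matrix with eigenvalues λ_1, ..., λ_n and let β ∈ R. Define the 2n×2n block matrix G = [[0, A], [-βI, (1+β)A]] and for each j the 2×2 matrix G_j = [[0, λ_j], [-β, (1+β)λ_j]]. Then the numerical range of G equals the convex hull of the numerical ranges of G_1, ..., G_n: W(G) = Co{W(G_1), ..., W(G_n)}. -/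
open Matrix

/-- The numerical range `W(G) = { x* G x : ‖x‖₂ = 1 }` of a complex matrix. -/
noncomputable def numericalRange {n : Type*} [Fintype n] (G : Matrix n n ℂ) : Set ℂ :=
  {z | ∃ x : EuclideanSpace ℂ n, ‖x‖ = 1 ∧ z = star (x : n → ℂ) ⬝ᵥ G.mulVec x}

/-!
The numerical range is the image of the Rayleigh quotient `x* M x / x* x` on nonzero vectors.
It is convex (Toeplitz–Hausdorff): after an affine change of `M` two of its points become `0`
and `1`; rotating the first vector by a phase makes the quadratic form real along the segment
joining the two vectors, which avoids `0`, and the intermediate value theorem fills `[0, 1]`.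
The Rayleigh quotient of a block-diagonal matrix is the convex combination of those of its
blocks, weighted by the squared norms of the slices of the vector, so the numerical range of a
direct sum is the convex hull of the union of the ranges of the blocks. Conjugating `G` by
`diag(U, U)`, where the orthogonal `U` diagonalizes `A`, and permuting coordinates turns `G`
into the direct sum of the `G_j`, and both operations preserve the numerical range.
-/

open scoped ComplexOrder

namespace Matrix

variable {m : Type*} [Fintype m]

/-- Equal to `0` at `x = 0`, where the division is by zero. -/
noncomputable def rayleighQuotient (M : Matrix m m ℂ) (x : m → ℂ) : ℂ :=
  (star x ⬝ᵥ M *ᵥ x) / (star x ⬝ᵥ x)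

lemma dotProduct_star_self_mul_rayleighQuotient (M : Matrix m m ℂ) (x : m → ℂ) :
    (star x ⬝ᵥ x) * M.rayleighQuotient x = star x ⬝ᵥ M *ᵥ x :=
  mul_div_cancel_of_imp' fun h ↦ by simp [dotProduct_star_self_eq_zero.mp h]

lemma rayleighQuotient_smul (M : Matrix m m ℂ) {c : ℂ} (hc : c ≠ 0) (x : m → ℂ) :
    M.rayleighQuotient (c • x) = M.rayleighQuotient x := by
  simp only [rayleighQuotient, mulVec_smul, star_smul, smul_dotProduct, dotProduct_smul,
    smul_eq_mul, ← mul_assoc]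
  exact mul_div_mul_left _ _ (mul_ne_zero hc (star_ne_zero.mpr hc))

lemma rayleighQuotient_smul_add_smul_one [DecidableEq m] (M : Matrix m m ℂ) (c z : ℂ)
    {x : m → ℂ} (hx : x ≠ 0) :
    (c • M + z • 1).rayleighQuotient x = c * M.rayleighQuotient x + z := by
  have : star x ⬝ᵥ x ≠ 0 := dotProduct_star_self_eq_zero.not.mpr hx
  simp only [rayleighQuotient, add_mulVec, smul_mulVec, one_mulVec, dotProduct_add,
    dotProduct_smul, smul_eq_mul]
  field_simp

lemma star_dotProduct_self_eq_norm_sq (x : EuclideanSpace ℂ m) :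
    star (x : m → ℂ) ⬝ᵥ x = ((‖x‖ ^ 2 : ℝ) : ℂ) := by
  rw [dotProduct_comm, ← EuclideanSpace.inner_eq_star_dotProduct, inner_self_eq_norm_sq_to_K]
  simp

lemma rayleighQuotient_of_norm_eq_one (M : Matrix m m ℂ) {x : EuclideanSpace ℂ m}
    (hx : ‖x‖ = 1) : M.rayleighQuotient x = star (x : m → ℂ) ⬝ᵥ M *ᵥ x := by
  simp [rayleighQuotient, star_dotProduct_self_eq_norm_sq, hx]

lemma numericalRange_eq_image_rayleighQuotient (M : Matrix m m ℂ) :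
    numericalRange M = M.rayleighQuotient '' {x | x ≠ 0} := by
  ext z
  constructor
  · rintro ⟨x, hx, rfl⟩
    refine ⟨x, fun h ↦ ?_, M.rayleighQuotient_of_norm_eq_one hx⟩
    simp [show x = 0 from WithLp.ofLp_injective 2 h] at hx
  · rintro ⟨x, hx, rfl⟩
    have hx' : ‖WithLp.toLp 2 x‖ ≠ 0 := by simpa using hx
    refine ⟨(‖WithLp.toLp 2 x‖⁻¹ : ℂ) • WithLp.toLp 2 x, by simp [norm_smul, hx'], ?_⟩
    rw [← M.rayleighQuotient_of_norm_eq_one (by simp [norm_smul, hx']), WithLp.ofLp_smul,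
      rayleighQuotient_smul M (by simpa using hx')]

lemma continuousOn_rayleighQuotient (M : Matrix m m ℂ) :
    ContinuousOn M.rayleighQuotient {x | x ≠ 0} := by
  refine ContinuousOn.div (by fun_prop) (by fun_prop) fun x hx ↦ ?_
  exact dotProduct_star_self_eq_zero.not.mpr hx

lemma im_dotProduct_star_self (x : m → ℂ) : (star x ⬝ᵥ x).im = 0 :=
  (Complex.nonneg_iff.mp (dotProduct_star_self_nonneg x)).2.symm

lemma ofReal_re_dotProduct_star_self (x : m → ℂ) :
    ((star x ⬝ᵥ x).re : ℂ) = star x ⬝ᵥ x :=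
  Complex.ext rfl (im_dotProduct_star_self x).symm

lemma im_rayleighQuotient_eq_zero {M : Matrix m m ℂ} {x : m → ℂ}
    (h : (star x ⬝ᵥ M *ᵥ x).im = 0) : (M.rayleighQuotient x).im = 0 := by
  simp [rayleighQuotient, Complex.div_im, h, im_dotProduct_star_self]

lemma _root_.Complex.exists_ne_zero_im_mul_eq_zero (d : ℂ) :
    ∃ c : ℂ, c ≠ 0 ∧ (c * d).im = 0 := by
  rcases eq_or_ne d 0 with rfl | hd
  · exact ⟨1, one_ne_zero, by simp⟩
  · exact ⟨star d, by simpa using hd, by simp [Complex.mul_im]; ring⟩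

lemma ofReal_mem_numericalRange_of_im_eq_zero {M : Matrix m m ℂ} {w y : m → ℂ}
    (hw : w ≠ 0) (hy : y ≠ 0) (hw0 : M.rayleighQuotient w = 0) (hy1 : M.rayleighQuotient y = 1)
    (him : (star w ⬝ᵥ M *ᵥ y + star y ⬝ᵥ M *ᵥ w).im = 0) {r : ℝ}
    (hr : r ∈ Set.Icc 0 1) : (r : ℂ) ∈ numericalRange M := by
  set p : ℝ → m → ℂ := fun t ↦ (1 - t) • w + t • y with hp
  have hqw : star w ⬝ᵥ M *ᵥ w = 0 := by
    rw [← dotProduct_star_self_mul_rayleighQuotient, hw0, mul_zero]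
  have hqy : star y ⬝ᵥ M *ᵥ y = star y ⬝ᵥ y := by
    rw [← dotProduct_star_self_mul_rayleighQuotient, hy1, mul_one]
  have hq : ∀ t, star (p t) ⬝ᵥ M *ᵥ p t
      = ((1 - t) * t : ℝ) • (star w ⬝ᵥ M *ᵥ y + star y ⬝ᵥ M *ᵥ w)
        + (t ^ 2 : ℝ) • (star y ⬝ᵥ y) := by
    intro t
    simp only [hp, star_add, star_smul, mulVec_add, mulVec_smul, dotProduct_add, add_dotProduct,
      dotProduct_smul, smul_dotProduct, hqw, hqy, star_trivial]
    module
  have hp0 : ∀ t ∈ Set.Icc (0 : ℝ) 1, p t ≠ 0 := by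
    -- `p t = 0` would give `t² y* M y = (1 - t)² w* M w = 0`, hence `t = 0` and `w = 0`
    intro t _ h
    have hty : t • y = (t - 1) • w := by
      rw [← sub_eq_zero, ← h]
      module
    have := congrArg (fun v ↦ star v ⬝ᵥ M *ᵥ v) hty
    simp only [star_smul, mulVec_smul, smul_dotProduct, dotProduct_smul, hqw, hqy, smul_zero,
      star_trivial] at this
    obtain rfl : t = 0 := by simpa [hy] using this
    simp [hp, hw] at h
  have hcont : ContinuousOn (fun t ↦ (M.rayleighQuotient (p t)).re) (Set.Icc 0 1) :=
    Complex.continuous_re.comp_continuousOn <|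
      M.continuousOn_rayleighQuotient.comp (by fun_prop) hp0
  obtain ⟨t, ht, hrt⟩ :=
    intermediate_value_Icc zero_le_one hcont (by simpa [hp, hw0, hy1] using hr)
  rw [numericalRange_eq_image_rayleighQuotient]
  refine ⟨p t, hp0 t ht, Complex.ext (by simpa using hrt) ?_⟩
  refine (im_rayleighQuotient_eq_zero ?_).trans (Complex.ofReal_im r).symm
  rw [hq, Complex.add_im, Complex.smul_im, Complex.smul_im, him, im_dotProduct_star_self]
  simp

lemma ofReal_mem_numericalRange {M : Matrix m m ℂ} {x y : m → ℂ} (hx : x ≠ 0) (hy : y ≠ 0)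
    (hx0 : M.rayleighQuotient x = 0) (hy1 : M.rayleighQuotient y = 1) {r : ℝ}
    (hr : r ∈ Set.Icc 0 1) : (r : ℂ) ∈ numericalRange M := by
  -- the phase `c` makes the cross term `(c x)* M y + y* M (c x)` real
  obtain ⟨c, hc, hcim⟩ :=
    Complex.exists_ne_zero_im_mul_eq_zero (star y ⬝ᵥ M *ᵥ x - star (star x ⬝ᵥ M *ᵥ y))
  refine ofReal_mem_numericalRange_of_im_eq_zero (w := c • x) (smul_ne_zero hc hx) hy
    (by rwa [rayleighQuotient_smul M hc]) hy1 ?_ hr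
  simp only [star_smul, mulVec_smul, smul_dotProduct, dotProduct_smul, smul_eq_mul] at hcim ⊢
  simp only [Complex.mul_im, Complex.add_im, Complex.sub_im, Complex.sub_re, Complex.star_def,
    Complex.conj_re, Complex.conj_im] at hcim ⊢
  linarith

theorem convex_numericalRange (M : Matrix m m ℂ) : Convex ℝ (numericalRange M) := by
  classical
  rw [numericalRange_eq_image_rayleighQuotient]
  rintro _ ⟨x₁, hx₁, rfl⟩ _ ⟨x₂, hx₂, rfl⟩ a b ha hb hab
  set z₁ := M.rayleighQuotient x₁
  set z₂ := M.rayleighQuotient x₂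
  rcases eq_or_ne z₁ z₂ with h | hne
  · rw [← h, ← add_smul, hab, one_smul]
    exact ⟨x₁, hx₁, rfl⟩
  set c := (z₂ - z₁)⁻¹
  have hc' : c * (z₂ - z₁) = 1 := inv_mul_cancel₀ (sub_ne_zero.mpr hne.symm)
  have hM' : ∀ x ≠ 0,
      (c • M + (-c * z₁) • 1).rayleighQuotient x = c * (M.rayleighQuotient x - z₁) :=
    fun x hx ↦ by rw [rayleighQuotient_smul_add_smul_one _ _ _ hx]; ring
  obtain ⟨x, hx, hxb⟩ := (numericalRange_eq_image_rayleighQuotient _).le <|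
    ofReal_mem_numericalRange hx₁ hx₂ (by rw [hM' _ hx₁, sub_self, mul_zero])
      (by rw [hM' _ hx₂]; exact hc') ⟨hb, by linarith⟩
  refine ⟨x, hx, ?_⟩
  rw [hM' x hx] at hxb
  have hab' : (a : ℂ) = 1 - b := by rw [eq_sub_iff_add_eq]; exact_mod_cast hab
  rw [Complex.real_smul, Complex.real_smul, hab', ← hxb]
  linear_combination (z₁ - M.rayleighQuotient x) * hc'

lemma rayleighQuotient_star_mul_mul [DecidableEq m] {U : Matrix m m ℂ} (hU : star U * U = 1)
    (M : Matrix m m ℂ) (x : m → ℂ) :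
    (star U * M * U).rayleighQuotient x = M.rayleighQuotient (U *ᵥ x) := by
  have key : ∀ N : Matrix m m ℂ,
      star x ⬝ᵥ (star U * N * U) *ᵥ x = star (U *ᵥ x) ⬝ᵥ N *ᵥ (U *ᵥ x) :=
    fun N ↦ by simp only [star_mulVec, mulVec_mulVec, dotProduct_mulVec, vecMul_vecMul,
      Matrix.mul_assoc, star_eq_conjTranspose]
  have hn := key 1
  rw [mul_one, hU, one_mulVec, one_mulVec] at hn
  rw [rayleighQuotient, rayleighQuotient, key, hn]

theorem numericalRange_star_mul_mul [DecidableEq m] {U : Matrix m m ℂ}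
    (hU : U ∈ unitaryGroup m ℂ) (M : Matrix m m ℂ) :
    numericalRange (star U * M * U) = numericalRange M := by
  have hU₁ : star U * U = 1 := mem_unitaryGroup_iff'.mp hU
  have hU₂ : U * star U = 1 := mem_unitaryGroup_iff.mp hU
  simp only [numericalRange_eq_image_rayleighQuotient]
  ext z
  constructor
  · rintro ⟨x, hx, rfl⟩
    refine ⟨U *ᵥ x, fun h ↦ hx ?_, (rayleighQuotient_star_mul_mul hU₁ M x).symm⟩
    rw [← one_mulVec x, ← hU₁, ← mulVec_mulVec, h, mulVec_zero]
  · rintro ⟨y, hy, rfl⟩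
    refine ⟨star U *ᵥ y, fun h ↦ hy ?_, ?_⟩
    · rw [← one_mulVec y, ← hU₂, ← mulVec_mulVec, h, mulVec_zero]
    · rw [rayleighQuotient_star_mul_mul hU₁, mulVec_mulVec, hU₂, one_mulVec]

theorem numericalRange_submatrix_equiv {l : Type*} [Fintype l] (M : Matrix m m ℂ) (e : l ≃ m) :
    numericalRange (M.submatrix e e) = numericalRange M := by
  have key : ∀ y, (M.submatrix e e).rayleighQuotient (y ∘ e) = M.rayleighQuotient y := by
    intro y
    simp only [rayleighQuotient, submatrix_mulVec_equiv, Function.comp_assoc,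
      Equiv.self_comp_symm, Function.comp_id]
    exact congrArg₂ (· / ·) (comp_equiv_dotProduct_comp_equiv (star y) _ e)
      (comp_equiv_dotProduct_comp_equiv (star y) _ e)
  simp only [numericalRange_eq_image_rayleighQuotient]
  ext z
  constructor
  · rintro ⟨x, hx, rfl⟩
    refine ⟨x ∘ e.symm, fun h ↦ hx ?_, by rw [← key, Function.comp_assoc, e.symm_comp_self,
      Function.comp_id]⟩
    simpa [Function.comp_assoc] using congrArg (· ∘ e) h
  · rintro ⟨y, hy, rfl⟩
    refine ⟨y ∘ e, fun h ↦ hy ?_, key y⟩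
    simpa [Function.comp_assoc] using congrArg (· ∘ e.symm) h

section BlockDiagonal

variable {o α : Type*} [Fintype o]

lemma dotProduct_eq_sum_slices [AddCommMonoid α] [Mul α] (u x : m × o → α) :
    u ⬝ᵥ x = ∑ k, (fun i ↦ u (i, k)) ⬝ᵥ fun i ↦ x (i, k) :=
  Fintype.sum_prod_type_right _

lemma dotProduct_blockDiagonal_mulVec [DecidableEq o] [NonUnitalNonAssocSemiring α]
    (M : o → Matrix m m α) (u x : m × o → α) :
    u ⬝ᵥ blockDiagonal M *ᵥ x =
      ∑ k, (fun i ↦ u (i, k)) ⬝ᵥ M k *ᵥ fun i ↦ x (i, k) := by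
  rw [dotProduct_eq_sum_slices]
  congr! 2 with k
  ext i
  simp [mulVec, dotProduct, Fintype.sum_prod_type_right, blockDiagonal_apply]

variable [DecidableEq o]

lemma rayleighQuotient_blockDiagonal (M : o → Matrix m m ℂ) (x : m × o → ℂ) :
    (blockDiagonal M).rayleighQuotient x = Finset.univ.centerMass
      (fun k ↦ (star (fun i ↦ x (i, k)) ⬝ᵥ fun i ↦ x (i, k)).re)
      (fun k ↦ (M k).rayleighQuotient fun i ↦ x (i, k)) := by
  simp only [Finset.centerMass, Complex.real_smul, ofReal_re_dotProduct_star_self,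
    dotProduct_star_self_mul_rayleighQuotient, Complex.ofReal_inv, Complex.ofReal_sum]
  rw [rayleighQuotient, dotProduct_blockDiagonal_mulVec, dotProduct_eq_sum_slices, div_eq_inv_mul]
  rfl

lemma rayleighQuotient_blockDiagonal_single (M : o → Matrix m m ℂ) (k : o) (v : m → ℂ) :
    (blockDiagonal M).rayleighQuotient (fun p ↦ (Pi.single k v : o → m → ℂ) p.2 p.1) =
      (M k).rayleighQuotient v := by
  set x : m × o → ℂ := fun p ↦ (Pi.single k v : o → m → ℂ) p.2 p.1
  have hq : star x ⬝ᵥ blockDiagonal M *ᵥ x = star v ⬝ᵥ M k *ᵥ v := by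
    rw [dotProduct_blockDiagonal_mulVec, Fintype.sum_eq_single k fun l hl ↦ by simp [x, hl]]
    simp [x, Pi.star_def]
  have hn : star x ⬝ᵥ x = star v ⬝ᵥ v := by
    rw [dotProduct_eq_sum_slices, Fintype.sum_eq_single k fun l hl ↦ by simp [x, hl]]
    simp [x, Pi.star_def]
  rw [rayleighQuotient, rayleighQuotient, hq, hn]

theorem numericalRange_blockDiagonal (M : o → Matrix m m ℂ) :
    numericalRange (blockDiagonal M) = convexHull ℝ (⋃ k, numericalRange (M k)) := by
  refine le_antisymm ?_ (convexHull_min (Set.iUnion_subset fun k ↦ ?_) (convex_numericalRange _))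
  · rw [numericalRange_eq_image_rayleighQuotient]
    rintro _ ⟨x, hx, rfl⟩
    rw [rayleighQuotient_blockDiagonal, ← Finset.centerMass_filter_ne_zero]
    refine Finset.centerMass_mem_convexHull _ (fun k _ ↦ ?_) ?_ fun k hk ↦ ?_
    · exact Complex.nonneg_iff.mp (dotProduct_star_self_nonneg _) |>.1
    · have hpos := (Complex.pos_iff.mp (dotProduct_star_self_pos_iff.mpr hx)).1
      rwa [dotProduct_eq_sum_slices, Complex.re_sum, ← Finset.sum_filter_ne_zero] at hpos
    · rw [Finset.mem_filter] at hk
      refine Set.mem_iUnion.mpr ⟨k, ?_⟩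
      rw [numericalRange_eq_image_rayleighQuotient]
      exact ⟨_, fun h ↦ hk.2 (by simp [h]), rfl⟩
  · rw [numericalRange_eq_image_rayleighQuotient, numericalRange_eq_image_rayleighQuotient]
    rintro _ ⟨v, hv, rfl⟩
    refine ⟨_, fun h ↦ hv (funext fun i ↦ ?_), rayleighQuotient_blockDiagonal_single M k v⟩
    simpa using congrFun h (i, k)

end BlockDiagonal

section Blocks

variable {n α : Type*}

lemma fromBlocks_mem_unitaryGroup [Fintype n] [DecidableEq n] [CommRing α] [StarRing α]
    {U V : Matrix n n α} (hU : U ∈ unitaryGroup n α) (hV : V ∈ unitaryGroup n α) :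
    fromBlocks U 0 0 V ∈ unitaryGroup (n ⊕ n) α := by
  rw [mem_unitaryGroup_iff, star_eq_conjTranspose, fromBlocks_conjTranspose, fromBlocks_multiply]
  simp [← star_eq_conjTranspose, mem_unitaryGroup_iff.mp hU, mem_unitaryGroup_iff.mp hV]

lemma star_fromBlocks_mul_fromBlocks_mul [Fintype n] [Semiring α] [StarRing α]
    (U V A B C D : Matrix n n α) :
    star (fromBlocks U 0 0 V) * fromBlocks A B C D * fromBlocks U 0 0 V =
      fromBlocks (star U * A * U) (star U * B * V) (star V * C * U) (star V * D * V) := by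
  simp [star_eq_conjTranspose, fromBlocks_conjTranspose, fromBlocks_multiply, Matrix.mul_assoc]

lemma blockDiagonal_eq_submatrix_fromBlocks [DecidableEq n] [Zero α] (a b c d : n → α) :
    blockDiagonal (fun j ↦ !![a j, b j; c j, d j]) =
      (fromBlocks (diagonal a) (diagonal b) (diagonal c) (diagonal d)).submatrix
        ((finTwoEquiv.prodCongr (Equiv.refl n)).trans (Equiv.boolProdEquivSum n))
        ((finTwoEquiv.prodCongr (Equiv.refl n)).trans (Equiv.boolProdEquivSum n)) := by
  ext ⟨i, k⟩ ⟨i', k'⟩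
  fin_cases i <;> fin_cases i' <;> simp [blockDiagonal_apply, diagonal_apply, finTwoEquiv]

end Blocks

lemma star_map_ofReal {n : Type*} (U : Matrix n n ℝ) :
    star (U.map ((↑) : ℝ → ℂ)) = (star U).map (↑) :=
  (conjTranspose_map _ fun r ↦ (Complex.conj_ofReal r).symm).symm

lemma map_ofReal_mem_unitaryGroup {n : Type*} [Fintype n] [DecidableEq n] {U : Matrix n n ℝ}
    (hU : U ∈ unitaryGroup n ℝ) : U.map ((↑) : ℝ → ℂ) ∈ unitaryGroup n ℂ := by
  rw [mem_unitaryGroup_iff, star_map_ofReal]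
  have h := congrArg (·.map Complex.ofRealHom) (mem_unitaryGroup_iff.mp hU)
  simp only [Matrix.map_mul, Matrix.map_one _ (map_zero _) (map_one _)] at h
  exact h

lemma IsHermitian.exists_unitary_star_mul_map_ofReal_mul_eq_diagonal {n : Type*} [Fintype n]
    [DecidableEq n] {A : Matrix n n ℝ} (hA : A.IsHermitian) :
    ∃ U ∈ unitaryGroup n ℂ,
      star U * A.map (↑) * U = diagonal fun j ↦ (hA.eigenvalues j : ℂ) := by
  set V : Matrix n n ℝ := ↑hA.eigenvectorUnitary
  have hV : V ∈ unitaryGroup n ℝ := hA.eigenvectorUnitary.2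
  have hdiag : star V * A * V = diagonal hA.eigenvalues := by
    simpa [Unitary.conjStarAlgAut_star_apply] using hA.conjStarAlgAut_star_eigenvectorUnitary
  refine ⟨V.map (↑), map_ofReal_mem_unitaryGroup hV, ?_⟩
  have h := congrArg (·.map Complex.ofRealHom) hdiag
  simp only [Matrix.map_mul, diagonal_map (map_zero _)] at h
  rw [star_map_ofReal]
  exact h

end Matrix

/-- For `A` real symmetric with eigenvalues `λ_1, …, λ_n` and
`β ∈ ℝ`, the numerical range of the Nesterov block operator
`G = [[0, A], [-βI, (1+β)A]]` is the convex hull of the numerical ranges of the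
`2×2` matrices `G_j = [[0, λ_j], [-β, (1+β)λ_j]]`. -/
theorem numericalRange_nesterov_block_eq_convexHull
    (n : ℕ) (A : Matrix (Fin n) (Fin n) ℝ) (hA : A.IsHermitian) (β : ℝ) :
    numericalRange
        (Matrix.fromBlocks (0 : Matrix (Fin n) (Fin n) ℂ) (A.map Complex.ofReal)
          ((-β : ℂ) • (1 : Matrix (Fin n) (Fin n) ℂ))
          (((1 : ℂ) + β) • A.map Complex.ofReal)) =
      convexHull ℝ
        (⋃ j : Fin n, numericalRange
          (!![(0 : ℂ), (hA.eigenvalues j : ℂ);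
              (-β : ℂ), ((1 : ℂ) + β) * (hA.eigenvalues j : ℂ)])) := by
  obtain ⟨U, hU, hUA⟩ := hA.exists_unitary_star_mul_map_ofReal_mul_eq_diagonal
  have hUU : star U * U = 1 := mem_unitaryGroup_iff'.mp hU
  rw [← numericalRange_star_mul_mul (fromBlocks_mem_unitaryGroup hU hU),
    star_fromBlocks_mul_fromBlocks_mul]
  simp only [Matrix.mul_zero, Matrix.zero_mul, Matrix.mul_smul, Matrix.smul_mul, Matrix.mul_one,
    hUU, hUA]
  rw [← numericalRange_blockDiagonal,
    blockDiagonal_eq_submatrix_fromBlocks (fun _ ↦ (0 : ℂ)) _ (fun _ ↦ -(β : ℂ))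
      (fun j ↦ (1 + (β : ℂ)) * hA.eigenvalues j),
    numericalRange_submatrix_equiv]
  congr 2 <;> ext i j <;> by_cases h : i = j <;> simp [one_apply, h]
end
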